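/- arXiv:1905.00381 — 5 statements merged into one kernel-verified Lean document; each statement's English description precedes it below -/
import Mathlib

section
/- Let 𝒜 be a topological space and let π : ℝ × [0,1] → 𝒜 be a covering map such that π(x,y) = π(x',y') if and only if x − x' ∈ ℤ and y = y'. Set ∂_in𝒜 = π(ℝ × {0}) and ∂_out𝒜 = π(ℝ × {1}). Let P, P' : [0,1] → 𝒜 be continuous paths with P(0), P'(0) ∈ ∂_in𝒜 and P(1), P'(1) ∈ ∂_out𝒜, and let P̂, P̂' : [0,1] → ℝ × [0,1] be continuous lifts (π ∘ P̂ = P, π ∘ P̂' = P'). Define the winding number wind(P) as the first coordinate of P̂(1) minus the first coordinate of P̂(0) (this is independent of the choice of lift), and similarly wind(P'). If wind(P) + 1 < wind(P'), then P and P' cross each other: there exist s, t ∈ [0,1] such that P(s) = P'(t) and the initial segments do not coincide, i.e. P([0,s]) ≠ P'([0,t]). -/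
/-!
Lift `P` and `P'` to the strip `ℝ × [0,1]`. If `P̂` and `P̂' + n` swap their horizontal order
between the bottom and the top of the strip, they meet: otherwise a continuous logarithm of
`P̂ s - (P̂' t + n)` on the square `[0,1]²` would gain `π` along the bottom and right edges, where
the difference lies in the upper half plane, and `π` again along the top and left edges, where it
lies in the lower one, yet return to its starting value. The winding hypothesis says that the
admissible `n` form an open interval of length greater than one.

If `P` and `P'` did not cross, any meeting would force `P 0 = P' 0`. Translating `P̂'` by an
integer we get `P̂ 0 = P̂' 0`, and then `n = -1` is admissible, which gives a mismatch: a point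
where `P s = P' t` but `P̂ s ≠ P̂' t`. Take a mismatch with `s + t` minimal. Below it the lifts
agree wherever the paths meet, so the equal initial segments lift to `P̂ s = P̂' v` and
`P̂' t = P̂ u` with `v ≤ t`, `u < s`; then `P[0,u] = P'[0,t]` yields `u' ≤ u` with
`P̂ u' = P̂' v = P̂ s`, a smaller mismatch `(u', t)`.
-/

open Set unitInterval Real

instance unitInterval.contractibleSpace : ContractibleSpace I :=
  (convex_Icc (0 : ℝ) 1).contractibleSpace ⟨0, unitInterval.zero_mem⟩

instance unitInterval.locallyPathConnectedSpace : LocallyPathConnectedSpace I :=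
  (convex_Icc (0 : ℝ) 1).locallyPathConnectedSpace

theorem im_mem_Icc_zero_pi_of_exp_im_nonneg {X : Type*} [TopologicalSpace X]
    [PreconnectedSpace X] {G : X → ℂ} (hG : Continuous G)
    (him : ∀ x, 0 ≤ (Complex.exp (G x)).im) {a : X}
    (ha : (G a).im ∈ Icc 0 π) (b : X) : (G b).im ∈ Icc 0 π := by
  have hsin : ∀ x, 0 ≤ Real.sin (G x).im := fun x =>
    nonneg_of_mul_nonneg_right (Complex.exp_im _ ▸ him x) (Real.exp_pos _)
  have hrange : IsPreconnected (range fun x => (G x).im) :=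
    isPreconnected_range (Complex.continuous_im.comp hG)
  have not_sin_neg {y : ℝ} (hy : y ∈ Icc (G a).im (G b).im ∪ Icc (G b).im (G a).im)
      (hz : Real.sin y < 0) : False := by
    obtain ⟨x, rfl⟩ := hy.elim (fun h => hrange.Icc_subset ⟨a, rfl⟩ ⟨b, rfl⟩ h)
      (fun h => hrange.Icc_subset ⟨b, rfl⟩ ⟨a, rfl⟩ h)
    exact (hsin x).not_gt hz
  by_contra hb
  rw [mem_Icc, not_and_or, not_le, not_le] at hb
  -- between `G a` and `G b` there is then a point of `(-π, 0)` or of `(π, 2π)`, where `sin < 0`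
  rcases hb with hlow | hhigh
  · have hy : max (G b).im (-1) ∈ Ioo (-π) 0 :=
      ⟨lt_max_of_lt_right (by linarith [pi_gt_three]), max_lt hlow (by norm_num)⟩
    exact not_sin_neg (.inr ⟨le_max_left _ _, by linarith [ha.1, hy.2]⟩)
      (Real.sin_neg_of_neg_of_neg_pi_lt hy.2 hy.1)
  · have hy : min (G b).im 4 - π ∈ Ioo 0 π :=
      ⟨by linarith [lt_min hhigh pi_lt_four], by linarith [min_le_right (G b).im 4, pi_gt_three]⟩
    refine not_sin_neg (.inl ⟨by linarith [ha.2, hy.1], min_le_left _ _⟩) ?_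
    rw [← neg_pos, ← Real.sin_sub_pi]
    exact Real.sin_pos_of_pos_of_lt_pi hy.1 hy.2

theorem Complex.im_eq_pi_of_exp_re_neg {z : ℂ} (hz : z.im ∈ Icc 0 π) (hre : (exp z).re < 0)
    (him : (exp z).im = 0) : z.im = π := by
  have harg : arg (exp z) = π := arg_eq_pi_iff.2 ⟨hre, him⟩
  rwa [arg_exp, (toIocMod_eq_self _).2 ⟨by linarith [hz.1, pi_pos], by linarith [hz.2]⟩] at harg

theorem exists_eq_of_swap_across_strip {f g : I → ℝ × I} (hf : Continuous f) (hg : Continuous g)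
    (hf0 : (f 0).2 = 0) (hf1 : (f 1).2 = 1) (hg0 : (g 0).2 = 0) (hg1 : (g 1).2 = 1)
    (h0 : (g 0).1 < (f 0).1) (h1 : (f 1).1 < (g 1).1) : ∃ s t, f s = g t := by
  by_contra! hfg
  let D : C(I × I, ℂ) :=
    ⟨fun q => ((f q.1).1 - (g q.2).1 : ℝ) + (((f q.1).2 : ℝ) - (g q.2).2 : ℝ) * Complex.I,
      by fun_prop⟩
  have hDre (s t : I) : (D (s, t)).re = (f s).1 - (g t).1 := by simp [D]
  have hDim (s t : I) : (D (s, t)).im = (f s).2 - (g t).2 := by simp [D]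
  have hD (q : I × I) : D q ≠ 0 := fun h => hfg q.1 q.2 <| Prod.ext
    (by linarith [hDre q.1 q.2, congrArg Complex.re h, Complex.zero_re])
    (Subtype.ext (by linarith [hDim q.1 q.2, congrArg Complex.im h, Complex.zero_im]))
  obtain ⟨F, ⟨hF00, hF⟩, -⟩ := Complex.isCoveringMapOn_exp.existsUnique_continuousMap_lifts D
    (Complex.exp_log (hD (0, 0))) hD
  have hexp (q : I × I) : Complex.exp (F q) = D q := congrFun hF q
  -- `F - πi` is a logarithm of `-D`, which lies in the upper half plane on the top and left edges
  have hexp_neg (q : I × I) : Complex.exp (F q - π * Complex.I) = -D q := by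
    rw [Complex.exp_sub, Complex.exp_pi_mul_I, hexp, div_neg, div_one]
  have hθ00 : (F (0, 0)).im = 0 := by
    rw [hF00, Complex.log_im, Complex.arg_eq_zero_iff, hDre, hDim, hf0, hg0]
    exact ⟨by linarith, by simp⟩
  have hbottom : (F (1, 0)).im ∈ Icc 0 π :=
    im_mem_Icc_zero_pi_of_exp_im_nonneg (G := fun s => F (s, 0)) (by fun_prop)
      (fun s => by simp only [hexp, hDim, hg0]; simpa using (f s).2.2.1)
      (a := 0) (by simp [hθ00, pi_pos.le]) 1
  have hright : (F (1, 1)).im ∈ Icc 0 π :=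
    im_mem_Icc_zero_pi_of_exp_im_nonneg (G := fun t => F (1, t)) (by fun_prop)
      (fun t => by simp only [hexp, hDim, hf1]; simpa using (g t).2.2.2) hbottom 1
  have hθ11 : (F (1, 1)).im = π :=
    Complex.im_eq_pi_of_exp_re_neg hright (by rw [hexp, hDre]; linarith)
      (by rw [hexp, hDim, hf1, hg1]; simp)
  have htop : (F (0, 1) - π * Complex.I).im ∈ Icc 0 π :=
    im_mem_Icc_zero_pi_of_exp_im_nonneg (G := fun s => F (s, 1) - π * Complex.I) (by fun_prop)
      (fun s => by simp only [hexp_neg, Complex.neg_im, hDim, hg1]; simpa using (f s).2.2.2)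
      (a := 1) (by simp [hθ11, pi_pos.le]) 0
  have hleft : (F (0, 0) - π * Complex.I).im ∈ Icc 0 π :=
    im_mem_Icc_zero_pi_of_exp_im_nonneg (G := fun t => F (0, t) - π * Complex.I) (by fun_prop)
      (fun t => by simp only [hexp_neg, Complex.neg_im, hDim, hf0]; simpa using (g t).2.2.1)
      htop 0
  have hθ00' : (F (0, 0) - π * Complex.I).im = -π := by simp [hθ00]
  linarith [pi_pos, hleft.1]

def Crosses {A : Type*} (P P' : I → A) : Prop :=
  ∃ s t, P s = P' t ∧ P '' Iic s ≠ P' '' Iic t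

section Crosses

variable {A : Type*} {P P' : I → A}

theorem image_Iic_eq_of_not_crosses (h : ¬Crosses P P') {s t : I} (hst : P s = P' t) :
    P '' Iic s = P' '' Iic t :=
  not_not.mp fun hne => h ⟨s, t, hst, hne⟩

theorem apply_zero_eq_of_not_crosses (h : ¬Crosses P P') {s t : I} (hst : P s = P' t) :
    P 0 = P' 0 := by
  obtain ⟨v, -, hv⟩ : P 0 ∈ P' '' Iic t :=
    image_Iic_eq_of_not_crosses h hst ▸ mem_image_of_mem P nonneg'
  obtain ⟨u, hu, hu0⟩ : P' 0 ∈ P '' Iic 0 :=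
    (image_Iic_eq_of_not_crosses h hv.symm).symm ▸ mem_image_of_mem P' nonneg'
  rwa [le_antisymm hu nonneg'] at hu0

variable {E : Type*} [TopologicalSpace E] [T2Space E] {p : E → A} {f g : I → E}

theorem mem_image_Iic_of_agree_below (hf : Continuous f) (hg : Continuous g) (h0 : f 0 = g 0)
    {s t : I} (hseg : (p ∘ f) '' Iic s ⊆ (p ∘ g) '' Iic t)
    (heq : ∀ u v, p (f u) = p (g v) → (u : ℝ) + v < s + t → f u = g v) :
    f s ∈ g '' Iic t := by
  rcases eq_or_ne s 0 with rfl | hs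
  · exact ⟨0, nonneg', h0.symm⟩
  have hbelow : f '' Iio s ⊆ g '' Iic t := by
    rintro _ ⟨u, hu, rfl⟩
    obtain ⟨v, hv, huv⟩ := hseg ⟨u, Iio_subset_Iic_self hu, rfl⟩
    exact ⟨v, hv, (heq u v huv.symm (add_lt_add_of_lt_of_le hu hv)).symm⟩
  have hs_mem : s ∈ closure (Iio s) := by
    rw [closure_Iio' ⟨0, pos_iff_ne_zero.2 hs⟩]
    exact mem_Iic.2 le_rfl
  exact ((isClosed_Iic.isCompact.image hg).isClosed.closure_subset_iff.2 hbelow)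
    (image_closure_subset_closure_image hf ⟨s, hs_mem, rfl⟩)

theorem crosses_comp_of_mismatch (hf : Continuous f) (hg : Continuous g) (h0 : f 0 = g 0)
    (hclosed : IsClosed {q : I × I | p (f q.1) = p (g q.2) ∧ f q.1 ≠ g q.2})
    (hne : ∃ s t, p (f s) = p (g t) ∧ f s ≠ g t) : Crosses (p ∘ f) (p ∘ g) := by
  by_contra hcross
  obtain ⟨s, t, hne⟩ := hne
  obtain ⟨⟨s, t⟩, ⟨hst, hst_ne⟩, hmin⟩ := hclosed.isCompact.exists_isMinOn ⟨(s, t), hne⟩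
    (f := fun q : I × I => (q.1 : ℝ) + q.2) (by fun_prop)
  have heq (u v : I) (huv : p (f u) = p (g v)) (hlt : (u : ℝ) + v < s + t) : f u = g v :=
    not_not.mp fun hne => (hmin (show (u, v) ∈ _ from ⟨huv, hne⟩)).not_gt hlt
  have hseg := image_Iic_eq_of_not_crosses hcross hst
  obtain ⟨v, hv, hgv⟩ := mem_image_Iic_of_agree_below hf hg h0 hseg.subset heq
  obtain ⟨u, hu, hfu⟩ := mem_image_Iic_of_agree_below hg hf h0.symm hseg.symm.subset
    fun v u hvu hlt => (heq u v hvu.symm (by linarith)).symm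
  have hus : u < s := lt_of_le_of_ne hu fun hus => hst_ne (hus ▸ hfu)
  obtain ⟨u', hu', hu'v⟩ : p (g v) ∈ (p ∘ f) '' Iic u :=
    (image_Iic_eq_of_not_crosses hcross (congrArg p hfu)) ▸ mem_image_of_mem (p ∘ g) hv
  have hu's : u' < s := hu'.trans_lt hus
  have hfu' : f u' = f s := (heq u' v hu'v (add_lt_add_of_lt_of_le hu's hv)).trans hgv
  have hmin' : (s : ℝ) + t ≤ u' + t :=
    hmin (show (u', t) ∈ _ from ⟨hfu' ▸ hst, hfu' ▸ hst_ne⟩)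
  linarith [show (u' : ℝ) < s from hu's]

end Crosses

def intTranslate (n : ℤ) (z : ℝ × I) : ℝ × I := (z.1 + n, z.2)

theorem continuous_intTranslate (n : ℤ) : Continuous (intTranslate n) := by
  unfold intTranslate; fun_prop

theorem intTranslate_ne_intTranslate {m n : ℤ} (h : m ≠ n) (z : ℝ × I) :
    intTranslate m z ≠ intTranslate n z :=
  fun he => h (by exact_mod_cast add_left_cancel (congrArg Prod.fst he))

theorem exists_eq_intTranslate_of_swap_across_strip {f g : I → ℝ × I} (hf : Continuous f)
    (hg : Continuous g) (hf0 : (f 0).2 = 0) (hf1 : (f 1).2 = 1) (hg0 : (g 0).2 = 0)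
    (hg1 : (g 1).2 = 1) {n : ℤ} (h1 : (f 1).1 - (g 1).1 < n) (h0 : n < (f 0).1 - (g 0).1) :
    ∃ s t, f s = intTranslate n (g t) :=
  exists_eq_of_swap_across_strip hf ((continuous_intTranslate n).comp hg) hf0 hf1 hg0 hg1
    (by simp only [intTranslate]; linarith)
    (by simp only [intTranslate]; linarith)

section Deck

variable {A : Type*} {p : ℝ × I → A}
  (hdeck : ∀ (x x' : ℝ) (y y' : I), p (x, y) = p (x', y') ↔ (∃ n : ℤ, x - x' = n) ∧ y = y')
include hdeck

theorem apply_intTranslate (n : ℤ) (z : ℝ × I) : p (intTranslate n z) = p z :=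
  (hdeck _ _ _ _).2 ⟨⟨n, add_sub_cancel_left _ _⟩, rfl⟩

theorem exists_eq_intTranslate_of_apply_eq {z w : ℝ × I} (h : p z = p w) :
    ∃ n : ℤ, z = intTranslate n w := by
  obtain ⟨⟨n, hn⟩, h2⟩ := (hdeck _ _ _ _).1 h
  exact ⟨n, Prod.ext (by simp only [intTranslate]; linarith) h2⟩

theorem snd_eq_of_mem_range {z : ℝ × I} {y : I} (h : p z ∈ range fun x => p (x, y)) : z.2 = y :=
  let ⟨_, hx⟩ := h
  ((hdeck _ _ _ _).1 hx).2.symm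

theorem isClosed_setOf_apply_eq_and_ne {X : Type*} [TopologicalSpace X] {f g : X → ℝ × I}
    (hf : Continuous f) (hg : Continuous g) :
    IsClosed {x | p (f x) = p (g x) ∧ f x ≠ g x} := by
  have hset : {x | p (f x) = p (g x) ∧ f x ≠ g x} =
      {x | (f x).2 = (g x).2} ∩ (fun x => (f x).1 - (g x).1) ⁻¹' (Int.cast '' {0}ᶜ) := by
    ext x
    constructor
    · rintro ⟨h, hne⟩
      obtain ⟨⟨n, hn⟩, h2⟩ := (hdeck _ _ _ _).1 h
      refine ⟨h2, n, fun hn0 => hne (Prod.ext ?_ h2), hn.symm⟩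
      rw [mem_singleton_iff.1 hn0, Int.cast_zero, sub_eq_zero] at hn
      exact hn
    · rintro ⟨h2, n, hn0, hn⟩
      refine ⟨(hdeck _ _ _ _).2 ⟨⟨n, hn.symm⟩, h2⟩, fun h => hn0 ?_⟩
      exact_mod_cast (show (n : ℝ) = 0 by simpa [h] using hn)
  rw [hset]
  exact (isClosed_eq (by fun_prop) (by fun_prop)).inter
    ((Int.isClosedEmbedding_coe_real.isClosedMap _ (isClosed_discrete _)).preimage (by fun_prop))

end Deck

theorem confluence_winding_crossing_general {A : Type*}
    (p : ℝ × unitInterval → A)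
    (hdeck : ∀ (x x' : ℝ) (y y' : unitInterval),
      p (x, y) = p (x', y') ↔ (∃ n : ℤ, x - x' = (n : ℝ)) ∧ y = y')
    (P P' : unitInterval → A)
    (hP0 : P 0 ∈ Set.range fun x : ℝ => p (x, 0))
    (hP'0 : P' 0 ∈ Set.range fun x : ℝ => p (x, 0))
    (hP1 : P 1 ∈ Set.range fun x : ℝ => p (x, 1))
    (hP'1 : P' 1 ∈ Set.range fun x : ℝ => p (x, 1))
    (Ph P'h : unitInterval → ℝ × unitInterval)
    (hPhCont : Continuous Ph) (hPhLift : p ∘ Ph = P)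
    (hP'hCont : Continuous P'h) (hP'hLift : p ∘ P'h = P')
    (hwind : (Ph 1).1 - (Ph 0).1 + 1 < (P'h 1).1 - (P'h 0).1) :
    ∃ s t : unitInterval, P s = P' t ∧
      P '' {u | u ≤ s} ≠ P' '' {u | u ≤ t} := by
  subst hPhLift hP'hLift
  by_contra hcross
  have hmeet {n : ℤ} := exists_eq_intTranslate_of_swap_across_strip (n := n) hPhCont hP'hCont
    (snd_eq_of_mem_range hdeck hP0) (snd_eq_of_mem_range hdeck hP1)
    (snd_eq_of_mem_range hdeck hP'0) (snd_eq_of_mem_range hdeck hP'1)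
  obtain ⟨s, t, hst⟩ := hmeet (n := ⌊(Ph 1).1 - (P'h 1).1⌋ + 1)
    (by push_cast; exact Int.lt_floor_add_one _)
    (by push_cast; linarith [Int.floor_le ((Ph 1).1 - (P'h 1).1)])
  obtain ⟨k, hk⟩ := exists_eq_intTranslate_of_apply_eq hdeck <|
    apply_zero_eq_of_not_crosses hcross (s := s) (t := t) <| by
      simp only [Function.comp_apply, hst, apply_intTranslate hdeck]
  have hk1 : (Ph 0).1 = (P'h 0).1 + k := congrArg Prod.fst hk
  obtain ⟨s, t, hst⟩ := hmeet (n := k - 1) (by push_cast; linarith) (by push_cast; linarith)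
  have hg : Continuous (intTranslate k ∘ P'h) := (continuous_intTranslate k).comp hP'hCont
  have hlift : p ∘ (intTranslate k ∘ P'h) = p ∘ P'h :=
    funext fun t => apply_intTranslate hdeck k (P'h t)
  refine hcross <| hlift ▸ crosses_comp_of_mismatch hPhCont hg hk
    (isClosed_setOf_apply_eq_and_ne hdeck (hPhCont.comp continuous_fst) (hg.comp continuous_snd))
    ⟨s, t, ?_, hst ▸ intTranslate_ne_intTranslate (by omega) _⟩
  simp only [Function.comp_apply, hst, apply_intTranslate hdeck]

/-- **Crossing of paths with different winding numbers in an annulus.**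
If `𝒜` is a topological space covered by `ℝ × [0,1]` via a covering map `p` whose deck
transformations are integer translations in the first coordinate, and `P, P'` are paths from the
inner boundary `p(ℝ × {0})` to the outer boundary `p(ℝ × {1})` whose winding numbers (defined via
continuous lifts) satisfy `wind(P) + 1 < wind(P')`, then `P` and `P'` cross each other: they meet
at a point such that their initial segments up to that point do not coincide. -/
theorem confluence_winding_crossing {A : Type*} [TopologicalSpace A]
    (p : ℝ × unitInterval → A)
    (hcov : IsCoveringMap p)
    (hdeck : ∀ (x x' : ℝ) (y y' : unitInterval),
      p (x, y) = p (x', y') ↔ (∃ n : ℤ, x - x' = (n : ℝ)) ∧ y = y')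
    (P P' : unitInterval → A) (hP : Continuous P) (hP' : Continuous P')
    (hP0 : P 0 ∈ Set.range fun x : ℝ => p (x, 0))
    (hP'0 : P' 0 ∈ Set.range fun x : ℝ => p (x, 0))
    (hP1 : P 1 ∈ Set.range fun x : ℝ => p (x, 1))
    (hP'1 : P' 1 ∈ Set.range fun x : ℝ => p (x, 1))
    (Ph P'h : unitInterval → ℝ × unitInterval)
    (hPhCont : Continuous Ph) (hPhLift : p ∘ Ph = P)
    (hP'hCont : Continuous P'h) (hP'hLift : p ∘ P'h = P')
    (hwind : (Ph 1).1 - (Ph 0).1 + 1 < (P'h 1).1 - (P'h 0).1) :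
    ∃ s t : unitInterval, P s = P' t ∧
      P '' {u | u ≤ s} ≠ P' '' {u | u ≤ t} :=
  confluence_winding_crossing_general p hdeck P P' hP0 hP'0 hP1 hP'1 Ph P'h hPhCont hPhLift hP'hCont
    hP'hLift hwind
end

section
/- Let f, g : ℂ → ℝ be smooth (infinitely differentiable with respect to the real structure of ℂ ≅ ℝ²) functions whose supports are compact subsets of ℂ ∖ {0}. Let ι : ℂ → ℂ be defined by ι(z) = 1/z for z ≠ 0 and ι(0) = 0. Then ∫_ℂ ⟨∇(f∘ι)(z), ∇(g∘ι)(z)⟩ dA(z) = ∫_ℂ ⟨∇f(z), ∇g(z)⟩ dA(z), where ∇ denotes the gradient of a real-valued function on ℂ viewed as a two-dimensional real inner product space, ⟨·,·⟩ is the real inner product on ℂ, and dA is Lebesgue (area) measure on ℂ. -/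
open MeasureTheory Complex

/-- The real determinant of multiplication by a complex number `c` is `normSq c`. -/
lemma det_complex_mul_clm (c : ℂ) :
    LinearMap.det
      (((ContinuousLinearMap.smulRight (1 : ℂ →L[ℂ] ℂ) c).restrictScalars ℝ :
        ℂ →L[ℝ] ℂ) : ℂ →ₗ[ℝ] ℂ) = Complex.normSq c := by
  rw [← Algebra.norm_complex_apply, Algebra.norm_apply]
  congr 1
  ext w
  simp [mul_comm]

/-- Chain rule for gradients of real functions composed with complex inversion. -/
lemma gradient_comp_inv (h : ℂ → ℝ) (hd : Differentiable ℝ h) {z : ℂ} (hz : z ≠ 0) :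
    gradient (fun w : ℂ => h w⁻¹) z
      = (starRingEnd ℂ) (-(z ^ 2)⁻¹) * gradient h z⁻¹ := by
  have hG : HasGradientAt h (gradient h z⁻¹) z⁻¹ := (hd z⁻¹).hasGradientAt
  have hι : HasFDerivAt (fun w : ℂ => w⁻¹)
      ((ContinuousLinearMap.smulRight (1 : ℂ →L[ℂ] ℂ) (-(z ^ 2)⁻¹)).restrictScalars ℝ) z :=
    (hasDerivAt_inv hz).hasFDerivAt.restrictScalars ℝ
  have hcomp := hG.hasFDerivAt.comp z hι
  have : HasGradientAt (fun w : ℂ => h w⁻¹)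
      ((starRingEnd ℂ) (-(z ^ 2)⁻¹) * gradient h z⁻¹) z := by
    rw [hasGradientAt_iff_hasFDerivAt]
    refine hcomp.congr_fderiv ?_
    apply ContinuousLinearMap.ext
    intro w
    simp only [InnerProductSpace.toDual_apply_apply, ContinuousLinearMap.comp_apply,
      ContinuousLinearMap.coe_restrictScalars', ContinuousLinearMap.smulRight_apply,
      ContinuousLinearMap.one_apply, smul_eq_mul, Complex.inner, map_mul, Complex.conj_conj]
    congr 1
    ring
  exact this.gradient

/-- Invariance of real inner products under simultaneous complex scaling, up to `normSq`. -/
lemma inner_complex_smul_smul (c F G : ℂ) :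
    (inner ℝ ((starRingEnd ℂ) c * F) ((starRingEnd ℂ) c * G) : ℝ)
      = Complex.normSq c * (inner ℝ F G : ℝ) := by
  simp [Complex.inner, Complex.mul_re, Complex.mul_im, Complex.normSq_apply]
  ring

/-- **Conformal invariance of the Dirichlet inner product under inversion** (used in Lemma 2.11 of
Gwynne-Miller, "Confluence of geodesics in Liouville quantum gravity for γ ∈ (0,2)"). If
`f, g : ℂ → ℝ` are smooth with compact support contained in `ℂ ∖ {0}` and `ι(z) = 1/z` (with
`ι(0) = 0`), then `∫ ⟨∇(f∘ι), ∇(g∘ι)⟩ dA = ∫ ⟨∇f, ∇g⟩ dA`, where `∇` is the gradient with respect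
to the real inner product structure of `ℂ` and `dA` is Lebesgue measure on `ℂ`. -/
theorem dirichlet_energy_inversion_invariant (f g : ℂ → ℝ)
    (hf : ContDiff ℝ (⊤ : ℕ∞) f) (hg : ContDiff ℝ (⊤ : ℕ∞) g)
    (hfsupp : HasCompactSupport f) (hgsupp : HasCompactSupport g)
    (hf0 : (0 : ℂ) ∉ tsupport f) (hg0 : (0 : ℂ) ∉ tsupport g) :
    ∫ z : ℂ, (inner ℝ (gradient (fun w : ℂ => f w⁻¹) z)
        (gradient (fun w : ℂ => g w⁻¹) z) : ℝ)
      = ∫ z : ℂ, (inner ℝ (gradient f z) (gradient g z) : ℝ) := by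
  have hfd : Differentiable ℝ f := hf.differentiable (by simp)
  have hgd : Differentiable ℝ g := hg.differentiable (by simp)
  set φ : ℂ → ℝ := fun z => (inner ℝ (gradient f z) (gradient g z) : ℝ) with hφ
  set s : Set ℂ := {(0 : ℂ)}ᶜ with hs
  have hsm : MeasurableSet s := (measurableSet_singleton 0).compl
  set ι' : ℂ → ℂ →L[ℝ] ℂ := fun z =>
    (ContinuousLinearMap.smulRight (1 : ℂ →L[ℂ] ℂ) (-(z ^ 2)⁻¹)).restrictScalars ℝ with hι'
  have hder : ∀ z ∈ s, HasFDerivWithinAt (fun w : ℂ => w⁻¹) (ι' z) s z := fun z hz =>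
    ((hasDerivAt_inv hz).hasFDerivAt.restrictScalars ℝ).hasFDerivWithinAt
  have hinj : Set.InjOn (fun w : ℂ => w⁻¹) s := inv_injective.injOn
  have himg : (fun w : ℂ => w⁻¹) '' s = s := by
    ext w
    simp only [Set.mem_image, hs, Set.mem_compl_iff, Set.mem_singleton_iff]
    constructor
    · rintro ⟨x, hx, rfl⟩; exact inv_ne_zero hx
    · intro hw; exact ⟨w⁻¹, inv_ne_zero hw, inv_inv w⟩
  have hrestrict : (volume : Measure ℂ).restrict s = volume := by
    conv_rhs => rw [← Measure.restrict_univ (μ := (volume : Measure ℂ))]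
    exact Measure.restrict_congr_set (MeasureTheory.ae_eq_univ.mpr (by simp [hs]))
  calc ∫ z : ℂ, (inner ℝ (gradient (fun w : ℂ => f w⁻¹) z)
        (gradient (fun w : ℂ => g w⁻¹) z) : ℝ)
      = ∫ z in s, (inner ℝ (gradient (fun w : ℂ => f w⁻¹) z)
        (gradient (fun w : ℂ => g w⁻¹) z) : ℝ) := by rw [hrestrict]
    _ = ∫ z in s, |(ι' z).det| • φ z⁻¹ := by
        apply setIntegral_congr_fun hsm
        intro z hz
        dsimp only
        have hz' : z ≠ 0 := hz
        rw [gradient_comp_inv f hfd hz', gradient_comp_inv g hgd hz',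
          inner_complex_smul_smul]
        have hdet : (ι' z).det = Complex.normSq (-(z ^ 2)⁻¹) := det_complex_mul_clm _
        rw [hdet, _root_.abs_of_nonneg (Complex.normSq_nonneg _), smul_eq_mul]
    _ = ∫ z in (fun w : ℂ => w⁻¹) '' s, φ z :=
        (integral_image_eq_integral_abs_det_fderiv_smul volume hsm hder hinj φ).symm
    _ = ∫ z in s, φ z := by rw [himg]
    _ = ∫ z : ℂ, φ z := by rw [hrestrict]
end

section
/- Let D be a metric on ℂ that induces the Euclidean topology, such that (ℂ, D) is a proper length space, and suppose that for every point q ∈ ℚ² (complex numbers with rational real and imaginary parts) there is exactly one D-geodesic from 0 to q. Then for every s > 0 and every point y on the topological boundary ∂𝓑_s^•(0;D) of the filled metric ball, one has D(0,y) = s, and there exist a D-geodesic P : [0,s] → ℂ from 0 to y and a sequence of points q_1, q_2, … ∈ ℚ² with q_n ∉ 𝓑_s^•(0;D) for all n, such that the restrictions to [0,s] of the unique D-geodesics from 0 to q_n converge uniformly on [0,s] to P. -/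
/-!
Because `D` induces the Euclidean topology it is jointly continuous, so the frontier of the filled
ball lies in the `D`-sphere of radius `s`, and rational points outside the filled ball accumulate
at `y`. Their geodesics, restricted to `[0, s]`, are `D`-isometries into the compact ball
`{w | D 0 w ≤ s}`, on which `D`-closeness forces Euclidean closeness uniformly; the family is
therefore equicontinuous, Arzelà–Ascoli extracts a uniformly convergent subsequence, and by
continuity of `D` its limit is a geodesic from `0` to `y`.
-/

open Set

/-- The filled metric ball `𝓑_s^•(z; D)`: the union of the closure of the open `D`-ball
`{v | D z v < s}` with all points disconnected from `∞` by this closure, i.e. the set of points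
whose connected component in the complement of the closed ball is bounded. -/
def filledBall (D : ℂ → ℂ → ℝ) (z : ℂ) (s : ℝ) : Set ℂ :=
  {w : ℂ | Bornology.IsBounded (connectedComponentIn (closure {v : ℂ | D z v < s})ᶜ w)}

/-- The `D`-length of `γ` on `[0,1]` (i.e. the supremum over partitions of the sums of
`D`-distances of consecutive points) is at most `c`. -/
def DLengthLE (D : ℂ → ℂ → ℝ) (γ : ℝ → ℂ) (c : ℝ) : Prop :=
  ∀ (n : ℕ) (t : Fin (n + 1) → ℝ), Monotone t → (∀ i, t i ∈ Icc (0 : ℝ) 1) →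
    t 0 = 0 → t (Fin.last n) = 1 →
    ∑ i : Fin n, D (γ (t i.castSucc)) (γ (t i.succ)) ≤ c

/-- `(ℂ, D)` is a length space: any two points are joined by continuous paths of `D`-length
arbitrarily close to their `D`-distance. -/
def IsLengthSpace (D : ℂ → ℂ → ℝ) : Prop :=
  ∀ x y : ℂ, ∀ ε : ℝ, 0 < ε → ∃ γ : ℝ → ℂ,
    ContinuousOn γ (Icc 0 1) ∧ γ 0 = x ∧ γ 1 = y ∧ DLengthLE D γ (D x y + ε)

/-- `P` is a `D`-geodesic from `x` to `y`: a unit speed path on `[0, D x y]` from `x` to `y`. -/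
def IsGeodesicFrom (D : ℂ → ℂ → ℝ) (x y : ℂ) (P : ℝ → ℂ) : Prop :=
  P 0 = x ∧ P (D x y) = y ∧
    ∀ a ∈ Icc (0 : ℝ) (D x y), ∀ b ∈ Icc (0 : ℝ) (D x y), D (P a) (P b) = |a - b|

/-- A point of `ℂ ≅ ℝ²` with rational coordinates. -/
def IsRationalPoint (q : ℂ) : Prop := ∃ a b : ℚ, q = (a : ℝ) + (b : ℝ) * Complex.I

open Filter Function Topology
open scoped BoundedContinuousFunction

section Filled

variable {X : Type*} [TopologicalSpace X] [Bornology X]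

/-- The points of `C` belong to `filled C`, since `connectedComponentIn Cᶜ w = ∅` for `w ∈ C`. -/
def filled (C : Set X) : Set X :=
  {w | Bornology.IsBounded (connectedComponentIn Cᶜ w)}

theorem compl_filled_subset (C : Set X) : (filled C)ᶜ ⊆ Cᶜ := fun w hw hwC => hw <| by
  change Bornology.IsBounded _
  rw [connectedComponentIn_eq_empty (notMem_compl_iff.mpr hwC)]
  exact Bornology.isBounded_empty

theorem connectedComponentIn_compl_subset_filled {C : Set X} {w : X} (hw : w ∈ filled C) :
    connectedComponentIn Cᶜ w ⊆ filled C := fun w' hw' => by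
  rwa [filled, mem_ofPred_eq, ← connectedComponentIn_eq hw']

theorem connectedComponentIn_compl_subset_compl_filled {C : Set X} {w : X} (hw : w ∉ filled C) :
    connectedComponentIn Cᶜ w ⊆ (filled C)ᶜ := fun w' hw' => by
  rwa [mem_compl_iff, filled, mem_ofPred_eq, ← connectedComponentIn_eq hw']

variable [LocallyConnectedSpace X] {C : Set X}

theorem isClosed_filled (hC : IsClosed C) : IsClosed (filled C) :=
  isOpen_compl_iff.mp <| isOpen_iff_forall_mem_open.mpr fun _ hw =>
    ⟨_, connectedComponentIn_compl_subset_compl_filled hw, hC.isOpen_compl.connectedComponentIn,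
      mem_connectedComponentIn (compl_filled_subset C hw)⟩

theorem frontier_filled_subset (hC : IsClosed C) : frontier (filled C) ⊆ frontier C := by
  intro w hw
  rw [frontier_eq_closure_inter_closure, hC.closure_eq]
  refine ⟨not_not.mp fun hwC => hw.2 ?_,
    closure_mono (compl_filled_subset C) (frontier_eq_closure_inter_closure.subset hw).2⟩
  exact interior_maximal
    (connectedComponentIn_compl_subset_filled ((isClosed_filled hC).frontier_subset hw))
    hC.isOpen_compl.connectedComponentIn (mem_connectedComponentIn hwC)

end Filled

section FilledBall

variable {D : ℂ → ℂ → ℝ} {z : ℂ} {s : ℝ}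

theorem isClosed_filledBall : IsClosed (filledBall D z s) :=
  isClosed_filled isClosed_closure

theorem le_of_notMem_filledBall {w : ℂ} (hw : w ∉ filledBall D z s) : s ≤ D z w :=
  not_lt.mp fun h => compl_filled_subset _ hw (subset_closure h)

theorem frontier_filledBall_subset (hD : Continuous (D z)) :
    frontier (filledBall D z s) ⊆ {w | D z w = s} :=
  (frontier_filled_subset isClosed_closure).trans <|
    frontier_closure_subset.trans (frontier_lt_subset_eq hD continuous_const)

end FilledBall

theorem continuous_uncurry_of_isOpen_iff {X : Type*} [TopologicalSpace X] {D : X → X → ℝ}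
    (hD0 : ∀ x, D x x = 0) (hDsymm : ∀ x y, D x y = D y x)
    (hDtri : ∀ x y z, D x z ≤ D x y + D y z)
    (htop : ∀ s : Set X, IsOpen s ↔ ∀ x ∈ s, ∃ ε > 0, {y | D x y < ε} ⊆ s) :
    Continuous (uncurry D) :=
  -- `ofDistTopology` keeps the given topology definitionally, so `dist = D` is continuous for it.
  letI := PseudoMetricSpace.ofDistTopology D hD0 hDsymm hDtri htop
  continuous_dist

theorem nonneg_of_triangle {X : Type*} {D : X → X → ℝ} (hD0 : ∀ x, D x x = 0)
    (hDsymm : ∀ x y, D x y = D y x) (hDtri : ∀ x y z, D x z ≤ D x y + D y z) (x y : X) :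
    0 ≤ D x y := by
  linarith [hDtri x y x, hD0 x, hDsymm x y]

theorem IsCompact.exists_pos_forall_lt_imp_dist_lt {X : Type*} [MetricSpace X] {K : Set X}
    (hK : IsCompact K) {D : X → X → ℝ} (hD : Continuous (uncurry D))
    (hDpos : ∀ x y, x ≠ y → 0 < D x y) {ε : ℝ} (hε : 0 < ε) :
    ∃ δ > 0, ∀ x ∈ K, ∀ y ∈ K, D x y < δ → dist x y < ε := by
  have hS : IsCompact (K ×ˢ K ∩ {p | ε ≤ dist p.1 p.2}) :=
    (hK.prod hK).inter_right (isClosed_le continuous_const continuous_dist)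
  obtain ⟨δ, hδ, hle⟩ := hS.exists_forall_le' hD.continuousOn fun p hp =>
    hDpos p.1 p.2 (dist_pos.mp (hε.trans_le hp.2))
  exact ⟨δ, hδ, fun x hx y hy hxy => not_le.mp fun h => (hle (x, y) ⟨⟨hx, hy⟩, h⟩).not_gt hxy⟩

theorem equicontinuous_of_le_dist {ι T X : Type*} [PseudoMetricSpace T] [MetricSpace X]
    {D : X → X → ℝ} (hD : Continuous (uncurry D)) (hDpos : ∀ x y, x ≠ y → 0 < D x y)
    {K : Set X} (hK : IsCompact K) {F : ι → T → X} (hFK : ∀ i t, F i t ∈ K)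
    (hF : ∀ i a b, D (F i a) (F i b) ≤ dist a b) : Equicontinuous F := by
  intro t₀
  rw [Metric.equicontinuousAt_iff]
  intro ε hε
  obtain ⟨δ, hδ, hδK⟩ := hK.exists_pos_forall_lt_imp_dist_lt hD hDpos hε
  refine ⟨δ, hδ, fun t ht i => hδK _ (hFK i t₀) _ (hFK i t) ?_⟩
  exact (hF i t₀ t).trans_lt (by rwa [dist_comm])

theorem Equicontinuous.exists_strictMono_tendstoUniformlyOn {T X : Type*} [TopologicalSpace T]
    [MetricSpace X] {S : Set T} (hS : IsCompact S) {K : Set X} (hK : IsCompact K)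
    {F : ℕ → T → X} (hF : Equicontinuous fun n (t : S) => F n t) (hFK : ∀ n, ∀ t ∈ S, F n t ∈ K) :
    ∃ G : T → X, ∃ φ : ℕ → ℕ, StrictMono φ ∧ TendstoUniformlyOn (F ∘ φ) G atTop S := by
  have := isCompact_iff_compactSpace.mp hS
  let F' : ℕ → S →ᵇ X := fun n => .mkOfCompact ⟨_, hF.continuous n⟩
  have hcompact : IsCompact (closure (range F')) := by
    refine BoundedContinuousFunction.arzela_ascoli K hK _ ?_ ?_
    · rintro _ t ⟨n, rfl⟩
      exact hFK n t t.2
    · convert hF.comp (rangeSplitting F') using 1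
      exact funext fun f => congrArg DFunLike.coe (apply_rangeSplitting F' f).symm
  obtain ⟨G, -, φ, hφ, hG⟩ := hcompact.tendsto_subseq fun n => subset_closure (mem_range_self n)
  classical
  refine ⟨fun t => if h : t ∈ S then G ⟨t, h⟩ else F 0 t, φ, hφ, ?_⟩
  rw [tendstoUniformlyOn_iff_tendstoUniformly_comp_coe]
  convert BoundedContinuousFunction.tendsto_iff_tendstoUniformly.mp hG using 1
  exacts [rfl, funext fun t => dif_pos t.2]

theorem dense_setOf_isRationalPoint : Dense {q | IsRationalPoint q} := by
  have : DenseRange (Complex.equivRealProdCLM.symm ∘ Prod.map ((↑) : ℚ → ℝ) ((↑) : ℚ → ℝ)) :=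
    Complex.equivRealProdCLM.symm.surjective.denseRange.comp
      (Rat.denseRange_cast.prodMap Rat.denseRange_cast) Complex.equivRealProdCLM.symm.continuous
  refine this.mono ?_
  rintro _ ⟨⟨a, b⟩, rfl⟩
  exact ⟨a, b, Complex.equivRealProdCLM_symm_apply _⟩

theorem exists_seq_isRationalPoint_tendsto {U : Set ℂ} (hU : IsOpen U) {y : ℂ}
    (hy : y ∈ closure U) :
    ∃ q : ℕ → ℂ, (∀ m, IsRationalPoint (q m) ∧ q m ∈ U) ∧ Tendsto q atTop (𝓝 y) := by
  obtain ⟨q, hqU, hqy⟩ := mem_closure_iff_seq_limit.mp <| closure_minimal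
    (dense_setOf_isRationalPoint.open_subset_closure_inter hU) isClosed_closure hy
  exact ⟨q, fun m => (hqU m).symm, hqy⟩

section Geodesic

variable {D : ℂ → ℂ → ℝ} {x y : ℂ} {P : ℝ → ℂ}

theorem IsGeodesicFrom.dist_eq (hP : IsGeodesicFrom D x y P) {s : ℝ} (hs : s ≤ D x y) {a b : ℝ}
    (ha : a ∈ Icc 0 s) (hb : b ∈ Icc 0 s) : D (P a) (P b) = |a - b| :=
  hP.2.2 a ⟨ha.1, ha.2.trans hs⟩ b ⟨hb.1, hb.2.trans hs⟩

theorem IsGeodesicFrom.dist_start (hP : IsGeodesicFrom D x y P) {t : ℝ} (ht : t ∈ Icc 0 (D x y)) :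
    D x (P t) = t := by
  have := hP.2.2 0 ⟨le_rfl, ht.1.trans ht.2⟩ t ht
  rwa [hP.1, zero_sub, abs_neg, abs_of_nonneg ht.1] at this

theorem IsGeodesicFrom.dist_end (hP : IsGeodesicFrom D x y P) {t : ℝ} (ht : t ∈ Icc 0 (D x y)) :
    D (P t) y = D x y - t := by
  have := hP.2.2 t ht (D x y) ⟨ht.1.trans ht.2, le_rfl⟩
  rwa [hP.2.1, abs_sub_comm, abs_of_nonneg (sub_nonneg.2 ht.2)] at this

theorem exists_strictMono_geodesics_tendstoUniformlyOn (hD : Continuous (uncurry D))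
    (hDpos : ∀ x y, x ≠ y → 0 < D x y) {s : ℝ} (hK : IsCompact {w | D x w ≤ s}) {q : ℕ → ℂ}
    {Pq : ℕ → ℝ → ℂ} (hPq : ∀ m, IsGeodesicFrom D x (q m) (Pq m)) (hsq : ∀ m, s ≤ D x (q m)) :
    ∃ P : ℝ → ℂ, ∃ φ : ℕ → ℕ, StrictMono φ ∧ TendstoUniformlyOn (Pq ∘ φ) P atTop (Icc 0 s) := by
  have hPqK : ∀ m, ∀ t ∈ Icc 0 s, Pq m t ∈ {w | D x w ≤ s} := fun m t ht => by
    rw [mem_ofPred_eq, (hPq m).dist_start ⟨ht.1, ht.2.trans (hsq m)⟩]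
    exact ht.2
  refine Equicontinuous.exists_strictMono_tendstoUniformlyOn isCompact_Icc hK ?_ hPqK
  refine equicontinuous_of_le_dist hD hDpos hK (fun m t => hPqK m t t.2) fun m a b => ?_
  rw [(hPq m).dist_eq (hsq m) a.2 b.2, Subtype.dist_eq, Real.dist_eq]

theorem isGeodesicFrom_of_tendsto (hD : Continuous (uncurry D)) (hD0 : ∀ x y, D x y = 0 ↔ x = y)
    (hxy : 0 ≤ D x y) {q : ℕ → ℂ} (hq : Tendsto q atTop (𝓝 y)) {Pq : ℕ → ℝ → ℂ}
    (hPq : ∀ m, IsGeodesicFrom D x (q m) (Pq m)) (hyq : ∀ m, D x y ≤ D x (q m))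
    (hP : ∀ t ∈ Icc 0 (D x y), Tendsto (fun m => Pq m t) atTop (𝓝 (P t))) :
    IsGeodesicFrom D x y P := by
  have hlim {a b : ℕ → ℂ} {a₀ b₀ : ℂ} (ha : Tendsto a atTop (𝓝 a₀))
      (hb : Tendsto b atTop (𝓝 b₀)) : Tendsto (fun m => D (a m) (b m)) atTop (𝓝 (D a₀ b₀)) :=
    (hD.tendsto (a₀, b₀)).comp (ha.prodMk_nhds hb)
  have hend : D x y ∈ Icc 0 (D x y) := ⟨hxy, le_rfl⟩
  refine ⟨tendsto_nhds_unique (hP 0 ⟨le_rfl, hxy⟩)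
    (tendsto_const_nhds.congr fun m => (hPq m).1.symm), (hD0 _ _).1 ?_, fun a ha b hb => ?_⟩
  · refine tendsto_nhds_unique (hlim (hP _ hend) hq) ?_
    have hgap : Tendsto (fun m => D x (q m) - D x y) atTop (𝓝 (D x y - D x y)) :=
      (hlim tendsto_const_nhds hq).sub_const _
    rw [sub_self] at hgap
    exact hgap.congr fun m => ((hPq m).dist_end ⟨hxy, hyq m⟩).symm
  · exact tendsto_nhds_unique (hlim (hP a ha) (hP b hb))
      (tendsto_const_nhds.congr fun m => ((hPq m).dist_eq (hyq m) ha hb).symm)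

end Geodesic

theorem boundary_geodesic_rational_approximation_general (D : ℂ → ℂ → ℝ)
    (hD0 : ∀ x y, D x y = 0 ↔ x = y)
    (hDsymm : ∀ x y, D x y = D y x)
    (hDtri : ∀ x y z, D x z ≤ D x y + D y z)
    (htop : ∀ s : Set ℂ, IsOpen s ↔ ∀ x ∈ s, ∃ ε > 0, {y : ℂ | D x y < ε} ⊆ s)
    (hproper : ∀ (x : ℂ) (r : ℝ), IsCompact {y : ℂ | D x y ≤ r})
    (hexists : ∀ q : ℂ, IsRationalPoint q → ∃ P : ℝ → ℂ, IsGeodesicFrom D 0 q P)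
    (s : ℝ) (y : ℂ) (hy : y ∈ frontier (filledBall D 0 s)) :
    D 0 y = s ∧
      ∃ P : ℝ → ℂ, IsGeodesicFrom D 0 y P ∧
        ∃ q : ℕ → ℂ, (∀ m, IsRationalPoint (q m) ∧ q m ∉ filledBall D 0 s) ∧
          ∃ Pq : ℕ → ℝ → ℂ, (∀ m, IsGeodesicFrom D 0 (q m) (Pq m)) ∧
            TendstoUniformlyOn (fun m => Pq m) P Filter.atTop (Icc 0 s) := by
  have hDself : ∀ x, D x x = 0 := fun x => (hD0 x x).2 rfl
  have hDnn := nonneg_of_triangle hDself hDsymm hDtri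
  have hD := continuous_uncurry_of_isOpen_iff hDself hDsymm hDtri htop
  have hDpos : ∀ x y, x ≠ y → 0 < D x y := fun x y hxy =>
    (hDnn x y).lt_of_ne fun h => hxy ((hD0 x y).1 h.symm)
  have hys : D 0 y = s := frontier_filledBall_subset (hD.comp (Continuous.prodMk_right 0)) hy
  obtain ⟨q, hq, hqy⟩ := exists_seq_isRationalPoint_tendsto isClosed_filledBall.isOpen_compl
    (frontier_eq_closure_inter_closure.subset hy).2
  choose Pq hPq using fun m => hexists (q m) (hq m).1
  have hsq : ∀ m, s ≤ D 0 (q m) := fun m => le_of_notMem_filledBall (hq m).2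
  obtain ⟨P, φ, hφ, hPqP⟩ :=
    exists_strictMono_geodesics_tendstoUniformlyOn hD hDpos (hproper 0 s) hPq hsq
  refine ⟨hys, P, ?_, q ∘ φ, fun m => hq (φ m), Pq ∘ φ, fun m => hPq (φ m), hPqP⟩
  subst hys
  exact isGeodesicFrom_of_tendsto hD hD0 (hDnn 0 y) (hqy.comp hφ.tendsto_atTop)
    (fun m => hPq (φ m)) (fun m => hsq (φ m)) fun t ht => hPqP.tendsto_at ht

/-- **Existence and rational approximation of geodesics to boundary points of filled metric
balls** (part of Lemma 2.5 of Gwynne-Miller, "Confluence of geodesics in Liouville quantum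
gravity for γ ∈ (0,2)"). Let `D` be a metric on `ℂ` inducing the Euclidean topology such that
`(ℂ, D)` is a proper length space with unique `D`-geodesics from `0` to each rational point.
Then for every `s > 0` and every `y ∈ ∂𝓑_s^•(0;D)` one has `D 0 y = s`, and there is a
`D`-geodesic `P` from `0` to `y` and points `qₘ ∈ ℚ² ∖ 𝓑_s^•(0;D)` whose geodesics from `0`
converge to `P` uniformly on `[0,s]`. -/
theorem boundary_geodesic_rational_approximation (D : ℂ → ℂ → ℝ)
    (hD0 : ∀ x y, D x y = 0 ↔ x = y)
    (hDsymm : ∀ x y, D x y = D y x)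
    (hDtri : ∀ x y z, D x z ≤ D x y + D y z)
    (htop : ∀ s : Set ℂ, IsOpen s ↔ ∀ x ∈ s, ∃ ε > 0, {y : ℂ | D x y < ε} ⊆ s)
    (hproper : ∀ (x : ℂ) (r : ℝ), IsCompact {y : ℂ | D x y ≤ r})
    (hlength : IsLengthSpace D)
    (hexists : ∀ q : ℂ, IsRationalPoint q → ∃ P : ℝ → ℂ, IsGeodesicFrom D 0 q P)
    (huniq : ∀ q : ℂ, IsRationalPoint q → ∀ P P' : ℝ → ℂ,
      IsGeodesicFrom D 0 q P → IsGeodesicFrom D 0 q P' →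
      ∀ t ∈ Icc (0 : ℝ) (D 0 q), P t = P' t)
    (s : ℝ) (hs : 0 < s) (y : ℂ) (hy : y ∈ frontier (filledBall D 0 s)) :
    D 0 y = s ∧
      ∃ P : ℝ → ℂ, IsGeodesicFrom D 0 y P ∧
        ∃ q : ℕ → ℂ, (∀ m, IsRationalPoint (q m) ∧ q m ∉ filledBall D 0 s) ∧
          ∃ Pq : ℕ → ℝ → ℂ, (∀ m, IsGeodesicFrom D 0 (q m) (Pq m)) ∧
            TendstoUniformlyOn (fun m => Pq m) P Filter.atTop (Icc 0 s) :=
  boundary_geodesic_rational_approximation_general D hD0 hDsymm hDtri htop hproper hexists s y hy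
end

section
/- Let D be a metric on ℂ that induces the Euclidean topology, such that (ℂ, D) is a proper length space. Let z ∈ ℂ and s > 0, and let x be a point of the topological boundary ∂𝓑_s^•(z;D) of the filled metric ball. Then: (i) D(z,x) = s; (ii) every D-geodesic from z to x has image contained in 𝓑_s^•(z;D); and (iii) for every D-geodesic P : [0,s] → ℂ from z to x and every t ∈ (0,s), the point P(t) lies on the topological boundary ∂𝓑_t^•(z;D). -/
open Set

/-- **Basic properties of geodesics to boundary points of filled metric balls** (Section 2.1 of
Gwynne-Miller, "Confluence of geodesics in Liouville quantum gravity for γ ∈ (0,2)"). Let `D` be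
a metric on `ℂ` inducing the Euclidean topology such that `(ℂ, D)` is a proper length space.
If `s > 0` and `x ∈ ∂𝓑_s^•(z; D)` then: (i) `D z x = s`; (ii) every `D`-geodesic from `z` to `x`
stays in `𝓑_s^•(z; D)`; (iii) for every `D`-geodesic `P : [0,s] → ℂ` from `z` to `x` and every
`t ∈ (0, s)`, the point `P t` lies on `∂𝓑_t^•(z; D)`. -/
theorem geodesic_filled_ball_boundary (D : ℂ → ℂ → ℝ)
    (hD0 : ∀ x y, D x y = 0 ↔ x = y)
    (hDsymm : ∀ x y, D x y = D y x)
    (hDtri : ∀ x y z, D x z ≤ D x y + D y z)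
    (htop : ∀ s : Set ℂ, IsOpen s ↔ ∀ x ∈ s, ∃ ε > 0, {y : ℂ | D x y < ε} ⊆ s)
    (hproper : ∀ (x : ℂ) (r : ℝ), IsCompact {y : ℂ | D x y ≤ r})
    (hlength : IsLengthSpace D)
    (z : ℂ) (s : ℝ) (hs : 0 < s) (x : ℂ) (hx : x ∈ frontier (filledBall D z s)) :
    D z x = s ∧
      ∀ P : ℝ → ℂ, IsGeodesicFrom D z x P →
        P '' Icc (0 : ℝ) s ⊆ filledBall D z s ∧
        ∀ t ∈ Ioo (0 : ℝ) s, P t ∈ frontier (filledBall D z t) := by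
  classical
  -- Basic metric facts
  have hDself : ∀ a : ℂ, D a a = 0 := fun a => (hD0 a a).2 rfl
  have hDnonneg : ∀ a b : ℂ, 0 ≤ D a b := by
    intro a b
    have h := hDtri a b a
    have h2 := hDsymm a b
    rw [hDself a] at h
    linarith
  have hball_open : ∀ (c : ℂ) (ε : ℝ), IsOpen {w : ℂ | D c w < ε} := by
    intro c ε
    rw [htop]
    intro w hw
    refine ⟨ε - D c w, by simpa using hw, fun y hy => ?_⟩
    have h := hDtri c w y
    simp only [mem_setOf_eq] at hy hw ⊢
    linarith
  have hDcont : ∀ c : ℂ, Continuous (fun w => D c w) := by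
    intro c
    rw [continuous_iff_continuousAt]
    intro w0
    have : Filter.Tendsto (fun w => D c w) (nhds w0) (nhds (D c w0)) := by
      rw [Metric.tendsto_nhds]
      intro ε hε
      have hmem : {w : ℂ | D w0 w < ε} ∈ nhds w0 :=
        (hball_open w0 ε).mem_nhds (by show D w0 w0 < ε; rw [hDself]; exact hε)
      filter_upwards [hmem] with w hw
      have hw' : D w0 w < ε := hw
      have h1 := hDtri c w0 w
      have h2 := hDtri c w w0
      have h3 := hDsymm w w0
      rw [Real.dist_eq, abs_sub_lt_iff]
      constructor <;> linarith
    exact this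
  -- closed balls are closed
  have hCclosed : ∀ t : ℝ, IsClosed {v : ℂ | D z v ≤ t} :=
    fun t => isClosed_le (hDcont z) continuous_const
  have hmemS : ∀ (t : ℝ) (w : ℂ), w ∈ filledBall D z t ↔
      Bornology.IsBounded (connectedComponentIn (closure {v : ℂ | D z v < t})ᶜ w) :=
    fun _ _ => Iff.rfl
  have hCB : ∀ t : ℝ, closure {v : ℂ | D z v < t} ⊆ {v : ℂ | D z v ≤ t} := by
    intro t
    apply closure_minimal ?_ (hCclosed t)
    intro v hv
    simp only [mem_setOf_eq] at hv ⊢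
    exact le_of_lt hv
  have hUopen : ∀ t : ℝ, IsOpen (closure {v : ℂ | D z v < t})ᶜ :=
    fun t => isClosed_closure.isOpen_compl
  -- closure of ball is inside the filled ball
  have hsubS : ∀ t : ℝ, closure {v : ℂ | D z v < t} ⊆ filledBall D z t := by
    intro t w hw
    have h : w ∉ (closure {v : ℂ | D z v < t})ᶜ := fun h => h hw
    rw [hmemS, connectedComponentIn_eq_empty h]
    exact Bornology.isBounded_empty
  -- complement of filled ball is open
  have hcompl : ∀ t : ℝ, IsOpen (filledBall D z t)ᶜ := by
    intro t
    rw [isOpen_iff_mem_nhds]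
    intro w hw
    have hwU : w ∈ (closure {v : ℂ | D z v < t})ᶜ := by
      by_contra h
      apply hw
      rw [hmemS, connectedComponentIn_eq_empty h]
      exact Bornology.isBounded_empty
    have hVopen : IsOpen (connectedComponentIn (closure {v : ℂ | D z v < t})ᶜ w) :=
      (hUopen t).connectedComponentIn
    refine Filter.mem_of_superset (hVopen.mem_nhds (mem_connectedComponentIn hwU)) ?_
    intro w' hw'
    have he : connectedComponentIn (closure {v : ℂ | D z v < t})ᶜ w
        = connectedComponentIn (closure {v : ℂ | D z v < t})ᶜ w' :=
      connectedComponentIn_eq hw'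
    intro hb
    apply hw
    rw [hmemS] at hb ⊢
    rw [he]
    exact hb
  have hSclosed : ∀ t : ℝ, IsClosed (filledBall D z t) :=
    fun t => isOpen_compl_iff.mp (hcompl t)
  -- length space: closed ball is in closure of open ball
  have hclos : ∀ t : ℝ, 0 < t → {v : ℂ | D z v ≤ t} ⊆ closure {v : ℂ | D z v < t} := by
    intro t ht w hw
    simp only [mem_setOf_eq] at hw
    rcases lt_or_eq_of_le hw with h | h
    · exact subset_closure h
    rw [mem_closure_iff]
    intro O hO hwO
    obtain ⟨ε, hε, hball⟩ := (htop O).1 hO w hwO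
    set η : ℝ := min (ε / 2) t / 2 with hηdef
    have hη0 : 0 < η := by positivity
    have hηt : η < t := by
      have : min (ε / 2) t ≤ t := min_le_right _ _
      simp only [hηdef]
      linarith
    have hηε : 2 * η ≤ ε / 2 := by
      have : min (ε / 2) t ≤ ε / 2 := min_le_left _ _
      simp only [hηdef]
      linarith
    obtain ⟨γ, hγc, hγ0, hγ1, hγlen⟩ := hlength z w η hη0
    have hg : ContinuousOn (fun u => D z (γ u)) (Icc (0:ℝ) 1) :=
      (hDcont z).comp_continuousOn hγc
    have hival := intermediate_value_Icc (by norm_num : (0:ℝ) ≤ 1) hg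
    have he0 : (fun u => D z (γ u)) 0 = 0 := by
      show D z (γ 0) = 0
      rw [hγ0, hDself]
    have he1 : (fun u => D z (γ u)) 1 = t := by
      show D z (γ 1) = t
      rw [hγ1, h]
    have hmem : t - η ∈ Icc ((fun u => D z (γ u)) 0) ((fun u => D z (γ u)) 1) := by
      rw [he0, he1]
      exact ⟨by linarith, by linarith⟩
    obtain ⟨u, hu, hgu⟩ := hival hmem
    have hu0 : (0:ℝ) ≤ u := hu.1
    have hu1 : u ≤ 1 := hu.2
    have hlen := hγlen 2 ![0, u, 1] ?_ ?_ ?_ ?_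
    · -- conclude
      have hsum : ∑ i : Fin 2, D (γ ((![0, u, 1] : Fin 3 → ℝ) i.castSucc))
          (γ ((![0, u, 1] : Fin 3 → ℝ) i.succ)) = D (γ 0) (γ u) + D (γ u) (γ 1) := by
        rw [Fin.sum_univ_two]
        norm_num [Fin.castSucc, Fin.succ]
        rfl
      rw [hsum, hγ0, hγ1] at hlen
      have hgu' : D z (γ u) = t - η := hgu
      rw [hgu', h] at hlen
      -- D (γ u) w ≤ 2η
      have hD2 : D (γ u) w ≤ 2 * η := by linarith
      refine ⟨γ u, hball ?_, ?_⟩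
      · show D w (γ u) < ε
        rw [hDsymm w (γ u)]
        linarith
      · show D z (γ u) < t
        rw [hgu']
        linarith
    · -- Monotone
      intro i j hij
      fin_cases i <;> fin_cases j <;>
        simp_all <;> first | linarith | (exfalso; exact absurd hij (by decide))
    · intro i
      fin_cases i <;> simp <;> constructor <;> linarith
    · simp
    · simp [Fin.last]
  -- monotonicity of filled balls
  have hCsub : ∀ t : ℝ, 0 < t → {v : ℂ | D z v ≤ t} ⊆ filledBall D z t :=
    fun t ht => (hclos t ht).trans (hsubS t)
  -- frontier facts for x
  have hxS : x ∈ filledBall D z s := by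
    have h := frontier_subset_closure hx
    rwa [(hSclosed s).closure_eq] at h
  have hxnotint : x ∉ interior (filledBall D z s) := by
    intro h
    rw [frontier_eq_closure_inter_closure] at hx
    have := hx.2
    rw [closure_compl] at this
    exact this h
  have hxcl : x ∈ closure (filledBall D z s)ᶜ := by
    rw [frontier_eq_closure_inter_closure] at hx
    exact hx.2
  -- Part (i)
  have hi : D z x = s := by
    rcases lt_trichotomy (D z x) s with h | h | h
    · exfalso
      apply hxnotint
      rw [mem_interior]
      exact ⟨{v : ℂ | D z v < s}, (subset_closure).trans (hsubS s), hball_open z s, h⟩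
    · exact h
    · exfalso
      have hxU : x ∈ (closure {v : ℂ | D z v < s})ᶜ := by
        intro hmem
        exact absurd (hCB s hmem) (not_le.2 h)
      have hVsub : connectedComponentIn (closure {v : ℂ | D z v < s})ᶜ x ⊆ filledBall D z s := by
        intro w' hw'
        have he := connectedComponentIn_eq hw'
        have hb := hxS
        rw [hmemS] at hb ⊢
        rw [← he]
        exact hb
      exact hxnotint (mem_interior.2
        ⟨_, hVsub, (hUopen s).connectedComponentIn, mem_connectedComponentIn hxU⟩)
  refine ⟨hi, ?_⟩
  intro P hP
  obtain ⟨hP0, hPs', hPiso'⟩ := hP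
  rw [hi] at hPs' hPiso'
  have hPdist : ∀ r ∈ Icc (0:ℝ) s, D z (P r) = r := by
    intro r hr
    have h := hPiso' 0 ⟨le_refl 0, hs.le⟩ r hr
    rw [hP0] at h
    rw [h, zero_sub, abs_neg, abs_of_nonneg hr.1]
  -- continuity of P on [0,s]
  have hPcont : ContinuousOn P (Icc 0 s) := by
    intro a ha
    show Filter.Tendsto P (nhdsWithin a (Icc 0 s)) (nhds (P a))
    rw [tendsto_nhds]
    intro O hO hPaO
    obtain ⟨ε, hε, hball⟩ := (htop O).1 hO (P a) hPaO
    have hmem : Metric.ball a ε ∩ Icc 0 s ∈ nhdsWithin a (Icc 0 s) :=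
      Filter.inter_mem (mem_nhdsWithin_of_mem_nhds (Metric.ball_mem_nhds a hε))
        self_mem_nhdsWithin
    filter_upwards [hmem] with b hb
    apply hball
    show D (P a) (P b) < ε
    rw [hPiso' a ha b hb.2]
    have := hb.1
    rw [Metric.mem_ball, Real.dist_eq] at this
    rwa [abs_sub_comm]
  constructor
  · -- Part (ii)
    rintro _ ⟨r, hr, rfl⟩
    rcases eq_or_lt_of_le hr.2 with h | h
    · rw [h, hPs']
      exact hxS
    · apply hsubS s
      apply subset_closure
      show D z (P r) < s
      rw [hPdist r hr]
      exact h
  · -- Part (iii)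
    intro t ht
    have htpos := ht.1
    have hts := ht.2
    have hPtS : P t ∈ filledBall D z t := by
      apply hCsub t htpos
      show D z (P t) ≤ t
      rw [hPdist t ⟨htpos.le, hts.le⟩]
    have hxUt : x ∈ (closure {v : ℂ | D z v < t})ᶜ := by
      intro hmem
      have := hCB t hmem
      simp only [mem_setOf_eq, hi] at this
      linarith
    -- P t is in the closure of the complement
    have hnotint : P t ∈ closure (filledBall D z t)ᶜ := by
      rw [mem_closure_iff]
      intro O hO hPO
      obtain ⟨ε, hε, hball⟩ := (htop O).1 hO (P t) hPO
      set r : ℝ := min (t + ε / 2) s with hrdef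
      have hrt : t < r := lt_min (by linarith) hts
      have hrs : r ≤ s := min_le_right _ _
      have hr0 : (0:ℝ) ≤ r := le_of_lt (lt_trans htpos hrt)
      have hrmem : r ∈ Icc (0:ℝ) s := ⟨hr0, hrs⟩
      have hPrO : P r ∈ O := by
        apply hball
        show D (P t) (P r) < ε
        rw [hPiso' t ⟨htpos.le, hts.le⟩ r hrmem]
        rw [abs_sub_comm, abs_of_nonneg (by linarith)]
        have : r ≤ t + ε / 2 := min_le_left _ _
        linarith
      refine ⟨P r, hPrO, ?_⟩
      -- P r is not in filledBall D z t
      intro hPrS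
      rw [hmemS] at hPrS
      -- the image P '' [r, s] is connected, inside U_t, and contains P r and x
      have hKsubU : P '' Icc r s ⊆ (closure {v : ℂ | D z v < t})ᶜ := by
        rintro _ ⟨b, hb, rfl⟩
        intro hmem
        have h1 := hCB t hmem
        simp only [mem_setOf_eq] at h1
        rw [hPdist b ⟨le_trans hr0 hb.1, hb.2⟩] at h1
        linarith [hb.1]
      have hKconn : IsPreconnected (P '' Icc r s) :=
        (isPreconnected_Icc).image P (hPcont.mono (Icc_subset_Icc hr0 (le_refl s)))
      have hPrK : P r ∈ P '' Icc r s := ⟨r, ⟨le_refl r, hrs⟩, rfl⟩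
      have hKsub : P '' Icc r s ⊆ connectedComponentIn (closure {v : ℂ | D z v < t})ᶜ (P r) :=
        hKconn.subset_connectedComponentIn hPrK hKsubU
      have hxK : x ∈ P '' Icc r s := ⟨s, ⟨hrs, le_refl s⟩, hPs'⟩
      have hxcomp : x ∈ connectedComponentIn (closure {v : ℂ | D z v < t})ᶜ (P r) :=
        hKsub hxK
      have hePr : connectedComponentIn (closure {v : ℂ | D z v < t})ᶜ (P r)
          = connectedComponentIn (closure {v : ℂ | D z v < t})ᶜ x :=
        connectedComponentIn_eq hxcomp
      -- get a point near x outside filledBall D z s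
      have hVopen : IsOpen (connectedComponentIn (closure {v : ℂ | D z v < t})ᶜ x) :=
        (hUopen t).connectedComponentIn
      rw [mem_closure_iff] at hxcl
      obtain ⟨w, hwV, hwS⟩ := hxcl _ hVopen (mem_connectedComponentIn hxUt)
      -- w outside filledBall z s: unbounded component in U_s
      have hwUnb : ¬ Bornology.IsBounded
          (connectedComponentIn (closure {v : ℂ | D z v < s})ᶜ w) :=
        fun hb => hwS ((hmemS s w).2 hb)
      apply hwUnb
      have hUsub : (closure {v : ℂ | D z v < s})ᶜ ⊆ (closure {v : ℂ | D z v < t})ᶜ := by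
        apply compl_subset_compl.2
        apply closure_mono
        intro v hv
        simp only [mem_setOf_eq] at hv ⊢
        linarith
      have h1 : connectedComponentIn (closure {v : ℂ | D z v < s})ᶜ w
          ⊆ connectedComponentIn (closure {v : ℂ | D z v < t})ᶜ w :=
        connectedComponentIn_mono w hUsub
      have h2 : connectedComponentIn (closure {v : ℂ | D z v < t})ᶜ x
          = connectedComponentIn (closure {v : ℂ | D z v < t})ᶜ w :=
        connectedComponentIn_eq hwV
      refine Bornology.IsBounded.subset ?_ h1
      rw [← h2, ← hePr]
      exact hPrS
    rw [frontier_eq_closure_inter_closure]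
    exact ⟨subset_closure hPtS, hnotint⟩
end

section
/- Let D be a metric on ℂ that induces the Euclidean topology, such that (ℂ, D) is a proper length space. For r > 0 define τ_r = inf{ s > 0 : 𝓑_s^•(0;D) ⊄ B_r(0) }, where B_r(0) = {z ∈ ℂ : |z| < r} is the open Euclidean ball. Then the function r ↦ τ_r from (0,∞) to (0,∞) is continuous and surjective. -/
open Set

/-- `τ_r`: the first radius `s` at which the filled `D`-ball `𝓑_s^•(0;D)` is not contained in the
Euclidean ball of radius `r` around `0`. -/
noncomputable def tauR (D : ℂ → ℂ → ℝ) (r : ℝ) : ℝ :=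
  sInf {s : ℝ | 0 < s ∧ ¬ filledBall D 0 s ⊆ Metric.ball (0 : ℂ) r}

namespace TauRAux

variable {D : ℂ → ℂ → ℝ}

section basic

variable (hD0 : ∀ x y, D x y = 0 ↔ x = y)
variable (hDsymm : ∀ x y, D x y = D y x)
variable (hDtri : ∀ x y z, D x z ≤ D x y + D y z)
variable (htop : ∀ s : Set ℂ, IsOpen s ↔ ∀ x ∈ s, ∃ ε > 0, {y : ℂ | D x y < ε} ⊆ s)
variable (hproper : ∀ (x : ℂ) (r : ℝ), IsCompact {y : ℂ | D x y ≤ r})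

include hD0 hDsymm hDtri in
lemma D_nonneg (x y : ℂ) : 0 ≤ D x y := by
  have h := hDtri x y x
  rw [(hD0 x x).mpr rfl, hDsymm y x] at h
  linarith

include hDtri htop in
lemma isOpen_Dball (x : ℂ) (ε : ℝ) : IsOpen {y : ℂ | D x y < ε} := by
  rw [htop]
  intro z hz
  refine ⟨ε - D x z, by simpa using hz, fun y hy => ?_⟩
  have := hDtri x z y
  simp only [mem_setOf_eq] at hy ⊢
  linarith

include hD0 hDsymm hDtri htop in
lemma continuous_D (x : ℂ) : Continuous (D x) := by
  rw [continuous_iff_continuousAt]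
  intro z
  rw [Metric.continuousAt_iff]
  intro ε hε
  have hop := isOpen_Dball hDtri htop z ε
  have hzmem : z ∈ {y : ℂ | D z y < ε} := by
    simp [mem_setOf_eq, (hD0 z z).mpr rfl, hε]
  obtain ⟨δ, hδ, hball⟩ := Metric.isOpen_iff.mp hop z hzmem
  refine ⟨δ, hδ, fun y hy => ?_⟩
  have hzy : D z y < ε := hball hy
  have h1 : D x y ≤ D x z + D z y := hDtri x z y
  have h2 : D x z ≤ D x y + D z y := by
    have := hDtri x y z
    rw [hDsymm y z] at this
    linarith
  rw [Real.dist_eq, abs_lt]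
  constructor <;> linarith

/-- The compact "hull-generating" set. -/
noncomputable def K (D : ℂ → ℂ → ℝ) (s : ℝ) : Set ℂ := closure {v : ℂ | D 0 v < s}

include hD0 hDsymm hDtri htop in
lemma K_subset (s : ℝ) : K D s ⊆ {v : ℂ | D 0 v ≤ s} := by
  apply closure_minimal
  · intro v hv
    show D 0 v ≤ s
    exact le_of_lt (show D 0 v < s from hv)
  · exact isClosed_Iic.preimage (continuous_D hD0 hDsymm hDtri htop 0)

include hD0 hDsymm hDtri htop hproper in
lemma K_compact (s : ℝ) : IsCompact (K D s) :=
  (hproper 0 s).of_isClosed_subset isClosed_closure (K_subset hD0 hDsymm hDtri htop s)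

include hD0 in
lemma K_nonempty {s : ℝ} (hs : 0 < s) : (K D s).Nonempty :=
  ⟨0, subset_closure (by simp [mem_setOf_eq, (hD0 0 0).mpr rfl, hs])⟩

include hD0 hDsymm hDtri htop hproper in
lemma exists_max (hs : 0 < s) :
    ∃ z₀ ∈ K D s, ∀ w ∈ K D s, ‖w‖ ≤ ‖z₀‖ := by
  obtain ⟨z₀, hz₀, hmax⟩ := (K_compact hD0 hDsymm hDtri htop hproper s).exists_isMaxOn
    (K_nonempty hD0 hs) continuous_norm.continuousOn
  exact ⟨z₀, hz₀, fun w hw => hmax hw⟩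

include hD0 hDsymm hDtri htop hproper in
/-- Key strict-growth lemma. -/
lemma exists_beyond {s s' : ℝ} (hs : 0 < s) (hss' : s < s') :
    ∃ z : ℂ, D 0 z < s' ∧ ∀ w ∈ K D s, ‖w‖ < ‖z‖ := by
  obtain ⟨z₀, hz₀K, hmax⟩ := exists_max hD0 hDsymm hDtri htop hproper hs
  have hz₀le : D 0 z₀ ≤ s := K_subset hD0 hDsymm hDtri htop s hz₀K
  have hop : IsOpen {y : ℂ | D z₀ y < s' - s} := isOpen_Dball hDtri htop z₀ (s' - s)
  have hz₀mem : z₀ ∈ {y : ℂ | D z₀ y < s' - s} := by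
    simp [mem_setOf_eq, (hD0 z₀ z₀).mpr rfl]; linarith
  obtain ⟨δ, hδ, hball⟩ := Metric.isOpen_iff.mp hop z₀ hz₀mem
  -- choose z slightly outward from z₀
  by_cases hz₀0 : z₀ = 0
  · refine ⟨(δ/2 : ℝ), ?_, fun w hw => ?_⟩
    · have hmem : ((δ/2 : ℝ) : ℂ) ∈ Metric.ball z₀ δ := by
        rw [Metric.mem_ball, hz₀0, dist_zero_right]
        simp only [Complex.norm_real, Real.norm_eq_abs, abs_of_pos (by linarith : (0:ℝ) < δ/2)]
        linarith
      have : D z₀ ((δ/2 : ℝ) : ℂ) < s' - s := hball hmem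
      have := hDtri 0 z₀ ((δ/2 : ℝ) : ℂ)
      linarith
    · have h1 : ‖w‖ ≤ ‖z₀‖ := hmax w hw
      rw [hz₀0, norm_zero] at h1
      have h2 : ‖((δ/2 : ℝ) : ℂ)‖ = δ/2 := by
        rw [Complex.norm_real, Real.norm_eq_abs, abs_of_pos (by linarith : (0:ℝ) < δ/2)]
      rw [h2]; linarith
  · have hn : (0:ℝ) < ‖z₀‖ := norm_pos_iff.mpr hz₀0
    set c : ℝ := 1 + δ / (2 * ‖z₀‖) with hc
    have hc1 : 1 < c := by
      have : 0 < δ / (2 * ‖z₀‖) := div_pos hδ (by linarith)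
      simp only [hc]; linarith
    refine ⟨(c : ℂ) * z₀, ?_, fun w hw => ?_⟩
    · have hdist : dist ((c : ℂ) * z₀) z₀ = δ / 2 := by
        have : (c : ℂ) * z₀ - z₀ = ((c - 1 : ℝ) : ℂ) * z₀ := by push_cast; ring
        rw [dist_eq_norm, this, norm_mul, Complex.norm_real, Real.norm_eq_abs,
          abs_of_pos (by linarith : (0:ℝ) < c - 1)]
        have hcc : c - 1 = δ / (2 * ‖z₀‖) := by simp [hc]
        have hne : ‖z₀‖ ≠ 0 := ne_of_gt hn
        rw [hcc, div_mul_eq_mul_div, mul_comm δ ‖z₀‖, mul_comm (2:ℝ) ‖z₀‖,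
          mul_div_mul_left _ _ hne]
      have hmem : (c : ℂ) * z₀ ∈ Metric.ball z₀ δ := by
        rw [Metric.mem_ball, hdist]; linarith
      have h2 : D z₀ ((c : ℂ) * z₀) < s' - s := hball hmem
      have := hDtri 0 z₀ ((c : ℂ) * z₀)
      linarith
    · have h1 : ‖w‖ ≤ ‖z₀‖ := hmax w hw
      have h2 : ‖(c : ℂ) * z₀‖ = c * ‖z₀‖ := by
        rw [norm_mul, Complex.norm_real, Real.norm_eq_abs,
          abs_of_pos (by linarith : (0:ℝ) < c)]
      rw [h2]
      nlinarith

lemma closure_subset_filledBall (s : ℝ) : K D s ⊆ filledBall D 0 s := by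
  intro w hw
  have hw' : w ∉ (closure {v : ℂ | D 0 v < s})ᶜ := fun h => h hw
  simp only [filledBall, mem_setOf_eq, connectedComponentIn_eq_empty hw']
  exact Bornology.isBounded_empty

include hD0 hDsymm hDtri htop hproper in
lemma norm_le_of_mem_filledBall {s : ℝ} (hs : 0 < s) {w : ℂ}
    (hw : w ∈ filledBall D 0 s) : ∃ z ∈ K D s, ‖w‖ ≤ ‖z‖ := by
  obtain ⟨z₀, hz₀K, hmax⟩ := exists_max hD0 hDsymm hDtri htop hproper hs
  refine ⟨z₀, hz₀K, ?_⟩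
  by_contra hlt
  push_neg at hlt
  have hw0 : (0:ℝ) < ‖w‖ := lt_of_le_of_lt (norm_nonneg z₀) hlt
  -- the ray from w to infinity lies in the complement of K D s
  set Rset : Set ℂ := (fun t : ℝ => (t : ℂ) * w) '' Ici 1 with hRset
  have hRconn : IsPreconnected Rset :=
    isPreconnected_Ici.image _ (Continuous.continuousOn (by continuity))
  have hwR : w ∈ Rset := ⟨1, mem_Ici.mpr le_rfl, by simp⟩
  have hRsub : Rset ⊆ (K D s)ᶜ := by
    rintro _ ⟨t, ht, rfl⟩ hmem
    have ht' : (1:ℝ) ≤ t := mem_Ici.mp ht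
    have h1 : ‖(t : ℂ) * w‖ = t * ‖w‖ := by
      rw [norm_mul, Complex.norm_real, Real.norm_eq_abs, abs_of_pos (by linarith : (0:ℝ) < t)]
    have h2 : ‖(t : ℂ) * w‖ ≤ ‖z₀‖ := hmax _ hmem
    have h3 : ‖w‖ ≤ t * ‖w‖ := by nlinarith
    linarith
  have hcomp : Rset ⊆ connectedComponentIn (K D s)ᶜ w :=
    hRconn.subset_connectedComponentIn hwR hRsub
  have hwB : Bornology.IsBounded (connectedComponentIn (K D s)ᶜ w) := hw
  have hbdd : Bornology.IsBounded Rset := hwB.subset hcomp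
  obtain ⟨C, hC⟩ := isBounded_iff_forall_norm_le.mp hbdd
  set t : ℝ := max 1 ((C + 1) / ‖w‖) with htdef
  have ht1 : 1 ≤ t := le_max_left _ _
  have hmem : (t : ℂ) * w ∈ Rset := ⟨t, mem_Ici.mpr ht1, rfl⟩
  have h1 : ‖(t : ℂ) * w‖ = t * ‖w‖ := by
    rw [norm_mul, Complex.norm_real, Real.norm_eq_abs, abs_of_pos (by linarith : (0:ℝ) < t)]
  have h2 : ‖(t : ℂ) * w‖ ≤ C := hC _ hmem
  have h3 : (C + 1) / ‖w‖ ≤ t := le_max_right _ _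
  have h4 : C + 1 ≤ t * ‖w‖ := (div_le_iff₀ hw0).mp h3
  linarith

include hD0 hDsymm hDtri htop hproper in
lemma not_subset_iff {s r : ℝ} (hs : 0 < s) :
    ¬ filledBall D 0 s ⊆ Metric.ball (0 : ℂ) r ↔ ∃ z ∈ K D s, r ≤ ‖z‖ := by
  constructor
  · intro h
    obtain ⟨w, hwF, hwB⟩ := not_subset.mp h
    have hr : r ≤ ‖w‖ := by
      rw [Metric.mem_ball, dist_zero_right] at hwB
      exact not_lt.mp hwB
    obtain ⟨z, hzK, hz⟩ := norm_le_of_mem_filledBall hD0 hDsymm hDtri htop hproper hs hwF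
    exact ⟨z, hzK, le_trans hr hz⟩
  · rintro ⟨z, hzK, hz⟩
    exact not_subset.mpr ⟨z, closure_subset_filledBall s hzK,
      by rw [Metric.mem_ball, dist_zero_right]; exact not_lt.mpr hz⟩

/-- The defining set for `tauR`. -/
def S (D : ℂ → ℂ → ℝ) (r : ℝ) : Set ℝ :=
  {s : ℝ | 0 < s ∧ ¬ filledBall D 0 s ⊆ Metric.ball (0 : ℂ) r}

lemma tauR_eq (r : ℝ) : tauR D r = sInf (S D r) := rfl

lemma S_bddBelow (r : ℝ) : BddBelow (S D r) := ⟨0, fun s hs => hs.1.le⟩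

include hD0 hDsymm hDtri htop hproper in
lemma S_nonempty (r : ℝ) : (S D r).Nonempty := by
  set z : ℂ := ((max r 0 + 1 : ℝ) : ℂ) with hz
  have hnz : ‖z‖ = max r 0 + 1 := by
    rw [hz, Complex.norm_real, Real.norm_eq_abs, abs_of_pos]
    have := le_max_right r 0; linarith
  set s : ℝ := D 0 z + 1 with hsdef
  have hs : 0 < s := by
    have := D_nonneg hD0 hDsymm hDtri 0 z; linarith
  refine ⟨s, hs, (not_subset_iff hD0 hDsymm hDtri htop hproper hs).mpr
    ⟨z, subset_closure (by simp [mem_setOf_eq, hsdef]), ?_⟩⟩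
  rw [hnz]
  have := le_max_left r 0; linarith

include hD0 hDsymm hDtri htop hproper in
lemma tauR_mono : Monotone (tauR D) := by
  intro r r' h
  apply csInf_le_csInf (S_bddBelow r) (S_nonempty hD0 hDsymm hDtri htop hproper r')
  intro s hs
  exact ⟨hs.1, fun hsub => hs.2 (hsub.trans (Metric.ball_subset_ball h))⟩

include hD0 hDsymm hDtri htop hproper in
lemma tauR_pos {r : ℝ} (hr : 0 < r) : 0 < tauR D r := by
  obtain ⟨ε, hε, hsub⟩ := (htop (Metric.ball (0:ℂ) r)).mp Metric.isOpen_ball 0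
    (Metric.mem_ball_self hr)
  have hlow : ∀ s ∈ S D r, ε / 2 ≤ s := by
    intro s hs
    by_contra hlt
    push_neg at hlt
    obtain ⟨z, hzK, hz⟩ := (not_subset_iff hD0 hDsymm hDtri htop hproper hs.1).mp hs.2
    have h1 : D 0 z ≤ s := K_subset hD0 hDsymm hDtri htop s hzK
    have h2 : z ∈ Metric.ball (0:ℂ) r := hsub (by simp only [mem_setOf_eq]; linarith)
    rw [Metric.mem_ball, dist_zero_right] at h2
    linarith
  have : ε / 2 ≤ tauR D r :=
    le_csInf (S_nonempty hD0 hDsymm hDtri htop hproper r) hlow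
  linarith

include hD0 hDsymm hDtri htop hproper in
lemma exists_tauR_eq {t : ℝ} (ht : 0 < t) : ∃ R : ℝ, 0 < R ∧ tauR D R = t := by
  obtain ⟨z₀, hz₀K, hmax⟩ := exists_max hD0 hDsymm hDtri htop hproper ht
  refine ⟨‖z₀‖, ?_, ?_⟩
  · -- positivity via exists_beyond at s = t/2
    obtain ⟨z, hzD, hz⟩ := exists_beyond hD0 hDsymm hDtri htop hproper
      (half_pos ht) (half_lt_self ht)
    have h0K : (0:ℂ) ∈ K D (t/2) :=
      subset_closure (by simp [mem_setOf_eq, (hD0 0 0).mpr rfl, half_pos ht])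
    have h1 : (0:ℝ) < ‖z‖ := by simpa using hz 0 h0K
    have h2 : ‖z‖ ≤ ‖z₀‖ := hmax z (subset_closure hzD)
    linarith
  · apply le_antisymm
    · exact csInf_le (S_bddBelow _)
        ⟨ht, (not_subset_iff hD0 hDsymm hDtri htop hproper ht).mpr ⟨z₀, hz₀K, le_refl _⟩⟩
    · apply le_csInf (S_nonempty hD0 hDsymm hDtri htop hproper _)
      intro s hs
      by_contra hlt
      push_neg at hlt
      obtain ⟨z', hz'K, hz'⟩ := (not_subset_iff hD0 hDsymm hDtri htop hproper hs.1).mp hs.2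
      obtain ⟨z'', hz''D, hz''⟩ := exists_beyond hD0 hDsymm hDtri htop hproper hs.1 hlt
      have h1 : ‖z''‖ ≤ ‖z₀‖ := hmax z'' (subset_closure hz''D)
      have h2 : ‖z'‖ < ‖z''‖ := hz'' z' hz'K
      linarith

end basic

end TauRAux

/-- **Continuity and surjectivity of the exit radii** (used in the proof of Theorem 1.3 of
Gwynne-Miller, "Confluence of geodesics in Liouville quantum gravity for γ ∈ (0,2)"). Let `D` be
a metric on `ℂ` inducing the Euclidean topology such that `(ℂ, D)` is a proper length space.
Then `r ↦ τ_r` maps `(0,∞)` into `(0,∞)`, is continuous on `(0,∞)`, and is surjective onto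
`(0,∞)`. -/
theorem tauR_continuous_surjective (D : ℂ → ℂ → ℝ)
    (hD0 : ∀ x y, D x y = 0 ↔ x = y)
    (hDsymm : ∀ x y, D x y = D y x)
    (hDtri : ∀ x y z, D x z ≤ D x y + D y z)
    (htop : ∀ s : Set ℂ, IsOpen s ↔ ∀ x ∈ s, ∃ ε > 0, {y : ℂ | D x y < ε} ⊆ s)
    (hproper : ∀ (x : ℂ) (r : ℝ), IsCompact {y : ℂ | D x y ≤ r})
    (hlength : IsLengthSpace D) :
    Set.MapsTo (tauR D) (Set.Ioi 0) (Set.Ioi 0) ∧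
      ContinuousOn (tauR D) (Set.Ioi 0) ∧
      Set.SurjOn (tauR D) (Set.Ioi 0) (Set.Ioi 0) := by
  have hmono := TauRAux.tauR_mono hD0 hDsymm hDtri htop hproper
  have hpos : ∀ r : ℝ, 0 < r → 0 < tauR D r :=
    fun r hr => TauRAux.tauR_pos hD0 hDsymm hDtri htop hproper hr
  refine ⟨fun r hr => hpos r hr, ?_, ?_⟩
  · -- continuity
    intro r₀ hr₀
    rw [mem_Ioi] at hr₀
    apply ContinuousAt.continuousWithinAt
    rw [Metric.continuousAt_iff]
    intro ε hε
    have ht₀ : 0 < tauR D r₀ := hpos r₀ hr₀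
    have htm0 : 0 < max (tauR D r₀ / 2) (tauR D r₀ - ε / 2) :=
      lt_of_lt_of_le (by linarith) (le_max_left _ _)
    have htp0 : 0 < tauR D r₀ + ε / 2 := by linarith
    obtain ⟨Rm, hRm0, hRmτ⟩ := TauRAux.exists_tauR_eq hD0 hDsymm hDtri htop hproper htm0
    obtain ⟨Rp, hRp0, hRpτ⟩ := TauRAux.exists_tauR_eq hD0 hDsymm hDtri htop hproper htp0
    have htmlt : max (tauR D r₀ / 2) (tauR D r₀ - ε / 2) < tauR D r₀ :=
      max_lt (by linarith) (by linarith)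
    have htmge : tauR D r₀ - ε / 2 ≤ max (tauR D r₀ / 2) (tauR D r₀ - ε / 2) :=
      le_max_right _ _
    have hRmlt : Rm < r₀ := by
      by_contra h
      push_neg at h
      have h2 := hmono h
      rw [hRmτ] at h2
      linarith
    have hRplt : r₀ < Rp := by
      by_contra h
      push_neg at h
      have h2 := hmono h
      rw [hRpτ] at h2
      linarith
    refine ⟨min (r₀ - Rm) (Rp - r₀), lt_min (by linarith) (by linarith), fun r hr => ?_⟩
    rw [Real.dist_eq, abs_lt] at hr
    have hmin1 : min (r₀ - Rm) (Rp - r₀) ≤ r₀ - Rm := min_le_left _ _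
    have hmin2 : min (r₀ - Rm) (Rp - r₀) ≤ Rp - r₀ := min_le_right _ _
    have hr1 : Rm ≤ r := by linarith [hr.1]
    have hr2 : r ≤ Rp := by linarith [hr.2]
    have hle1 : max (tauR D r₀ / 2) (tauR D r₀ - ε / 2) ≤ tauR D r := by
      rw [← hRmτ]; exact hmono hr1
    have hle2 : tauR D r ≤ tauR D r₀ + ε / 2 := by
      rw [← hRpτ]; exact hmono hr2
    rw [Real.dist_eq, abs_lt]
    constructor <;> linarith
  · -- surjectivity
    intro t ht
    rw [mem_Ioi] at ht
    obtain ⟨R, hR0, hRτ⟩ := TauRAux.exists_tauR_eq hD0 hDsymm hDtri htop hproper ht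
    exact ⟨R, mem_Ioi.mpr hR0, hRτ⟩
end
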